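/- Let J ⊆ I, w ∈ W^{δ(J)}, w₁ ∈ W with w₁ ∼_{J,δ} w, and u ∈ W_J with ℓ(u⁻¹ w₁) = ℓ(w₁) − ℓ(u). Then ℓ(u⁻¹ w₁ δ(u)) = ℓ(w) and u⁻¹ w₁ δ(u) ∼_{J,δ} w. -/

import Mathlib

open CoxeterSystem

variable {B W : Type*} [Group W] {M : CoxeterMatrix B}

/-- The Bruhat order on `W`, via the subword property: `x ≤ y` iff some reduced word for `y`
has a sublist whose product is `x`. -/
def CoxeterSystem.bruhatLE (cs : CoxeterSystem M W) (x y : W) : Prop :=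
  ∃ ω : List B, cs.IsReduced ω ∧ cs.wordProd ω = y ∧
    ∃ ω' : List B, ω'.Sublist ω ∧ cs.wordProd ω' = x

/-- The standard parabolic subgroup `W_J` of `W`, generated by `{sⱼ : j ∈ J}`. -/
def CoxeterSystem.parab (cs : CoxeterSystem M W) (J : Set B) : Subgroup W :=
  Subgroup.closure (cs.simple '' J)

/-- `w ∈ W^J`: `w` has minimal length in the coset `w * W_J`. -/
def CoxeterSystem.IsMinRight (cs : CoxeterSystem M W) (J : Set B) (w : W) : Prop :=
  ∀ u ∈ cs.parab J, cs.length w ≤ cs.length (w * u)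

/-- `w ∈ ᴶW`: `w` has minimal length in the coset `W_J * w`. -/
def CoxeterSystem.IsMinLeft (cs : CoxeterSystem M W) (J : Set B) (w : W) : Prop :=
  ∀ u ∈ cs.parab J, cs.length w ≤ cs.length (u * w)

/-- `w'` is obtained from `w` by a `(J, δ)`-cyclic shift (where `δ` is induced by the
bijection `π` of the index set): `ℓ(w) = ℓ(w')` and there is a reduced expression
`w = s_{i₁} ⋯ s_{iₙ}` with either `i₁ ∈ J` and `w' = s_{i₁} w s_{δ(i₁)}`, or
`iₙ ∈ δ(J)` and `w' = s_{δ⁻¹(iₙ)} w s_{iₙ}`. -/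
def CoxeterSystem.CyclicShift (cs : CoxeterSystem M W) (π : B ≃ B) (J : Set B)
    (w w' : W) : Prop :=
  cs.length w = cs.length w' ∧
  ∃ ω : List B, cs.IsReduced ω ∧ cs.wordProd ω = w ∧
    ((∃ i ∈ J, ω.head? = some i ∧ w' = cs.simple i * w * cs.simple (π i)) ∨
     (∃ i ∈ π '' J, ω.getLast? = some i ∧ w' = cs.simple (π.symm i) * w * cs.simple i))

/-! Induct along a reduced `J`-word for `u`. Removing its last letter `s_k` writes
`u⁻¹ w₁ δ(u)` as `s_k x δ(s_k)` with `x ∼_{J,δ} w` by induction, and the length hypothesis makes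
`s_k` a left descent of `x`; so `x ↦ s_k x δ(s_k)` is a cyclic shift once it does not shorten `x`.
It cannot: every `y ∼_{J,δ} w` has the form `a w δ(a)⁻¹` with `a ∈ W_J`, and such elements are no
shorter than `w`, since `ℓ(w b) = ℓ(w) + ℓ(b)` for `w ∈ W^{δ(J)}` and `b ∈ W_{δ(J)}`. This
additivity, and the existence of reduced `J`-words for the elements of `W_J`, rest on the exchange
condition, derived here from Bourbaki's sign representation of `W` on `W × ℤ/2`. -/

open List

namespace CoxeterSystem

variable (cs : CoxeterSystem M W)

local prefix:100 "s" => cs.simple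
local prefix:100 "π" => cs.wordProd
local prefix:100 "ℓ" => cs.length
local prefix:100 "ris " => cs.rightInvSeq

theorem rightInvSeq_cons (i : B) (ω : List B) :
    ris (i :: ω) = (π ω)⁻¹ * s i * π ω :: ris ω := rfl

theorem rightInvSeq_append (ω ω' : List B) :
    ris (ω ++ ω') = (ris ω).map (MulAut.conj (π ω')⁻¹) ++ ris ω' := by
  induction ω with
  | nil => simp
  | cons i ω ih =>
    simp only [cons_append, rightInvSeq_cons, ih, map_cons, MulAut.conj_apply, wordProd_append,
      mul_inv_rev, inv_inv]
    group

theorem rightInvSeq_alternatingWord (i i' : B) (k : ℕ) :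
    ris (alternatingWord i i' k) = ((range k).map fun n => (s i' * s i) ^ n * s i').reverse := by
  induction k generalizing i i' with
  | zero => simp [alternatingWord]
  | succ k ih =>
    rw [alternatingWord_succ, rightInvSeq_concat, ih, range_succ_eq_map]
    simp only [map_reverse, map_map, map_cons, reverse_cons, concat_eq_append, pow_zero, one_mul]
    congr 2
    refine map_congr_left fun n _ => ?_
    simp only [Function.comp_apply, MulAut.conj_apply, inv_simple, pow_succ', mul_assoc,
      mul_pow_mul]

theorem prod_map_alternatingWord_two_mul {G : Type*} [Monoid G] (f : B → G) (i i' : B) (n : ℕ) :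
    ((alternatingWord i i' (2 * n)).map f).prod = (f i * f i') ^ n := by
  induction n with
  | zero => simp [alternatingWord]
  | succ n ih =>
    rw [show 2 * (n + 1) = 2 * n + 1 + 1 by ring, alternatingWord_succ', alternatingWord_succ',
      if_neg (by simp [parity_simps]), if_pos (by simp [parity_simps])]
    simp [ih, pow_succ', mul_assoc]

theorem simple_mul_mul_simple_eq_simple_iff (i : B) (t : W) :
    s i * t * s i = s i ↔ t = s i := by
  rw [← (MulAut.conj (s i)).injective.eq_iff]
  simp [mul_assoc]

section SignRepresentation

variable [DecidableEq W]

noncomputable def signPerm (i : B) : Equiv.Perm (W × ZMod 2) :=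
  Function.Involutive.toPerm (fun p => (s i * p.1 * s i, p.2 + if p.1 = s i then 1 else 0))
    fun ⟨t, z⟩ => by
      refine Prod.ext ?_ ?_
      · simp [mul_assoc]
      · simp only [simple_mul_mul_simple_eq_simple_iff, add_assoc]
        split_ifs <;> decide +revert

theorem signPerm_apply (i : B) (p : W × ZMod 2) :
    cs.signPerm i p = (s i * p.1 * s i, p.2 + if p.1 = s i then 1 else 0) := rfl

theorem prod_map_signPerm_apply (ω : List B) (p : W × ZMod 2) :
    (ω.map cs.signPerm).prod p = (π ω * p.1 * (π ω)⁻¹, p.2 + ((ris ω).count p.1 : ZMod 2)) := by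
  induction ω generalizing p with
  | nil => simp
  | cons i ω ih =>
    have hconj : π ω * (p.1 * (π ω)⁻¹) = s i ↔ (π ω)⁻¹ * (s i * π ω) = p.1 := by
      constructor <;> intro h <;> rw [← h] <;> group
    rw [map_cons, prod_cons, Equiv.Perm.mul_apply, ih, signPerm_apply]
    simp only [wordProd_cons, mul_inv_rev, inv_simple, rightInvSeq_cons, count_cons, beq_iff_eq,
      mul_assoc, Nat.cast_add, Nat.cast_ite, Nat.cast_one, Nat.cast_zero]
    simp only [hconj, add_assoc]

theorem signPerm_isLiftable : M.IsLiftable cs.signPerm := by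
  intro i i'
  rw [← prod_map_alternatingWord_two_mul]
  ext1 p
  have hprod : π (alternatingWord i i' (2 * M i i')) = 1 := by
    rw [prod_alternatingWord_eq_mul_pow, if_pos (by simp [parity_simps]),
      Nat.mul_div_cancel_left _ two_pos, one_mul, simple_mul_simple_pow]
  have hperiod : ((range (M i i')).map fun n => (s i' * s i) ^ (M i i' + n) * s i') =
      (range (M i i')).map fun n => (s i' * s i) ^ n * s i' := by
    simp [pow_add]
  rw [prod_map_signPerm_apply, hprod, rightInvSeq_alternatingWord, count_reverse, two_mul,
    range_add, map_append, map_map, count_append]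
  simp only [Function.comp_def, hperiod, ← two_mul]
  rw [Nat.cast_mul, ZMod.natCast_self, zero_mul, add_zero]
  simp

noncomputable def signRep : W →* Equiv.Perm (W × ZMod 2) :=
  cs.lift ⟨cs.signPerm, cs.signPerm_isLiftable⟩

theorem signRep_wordProd_apply (ω : List B) (p : W × ZMod 2) :
    cs.signRep (π ω) p = (π ω * p.1 * (π ω)⁻¹, p.2 + ((ris ω).count p.1 : ZMod 2)) := by
  have hmap : cs.signRep (π ω) = (ω.map cs.signPerm).prod := by
    simp [wordProd, map_list_prod, signRep, Function.comp_def]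
  rw [hmap, prod_map_signPerm_apply]

end SignRepresentation

/-- The parity of the number of occurrences of `t` in `ris ω` only depends on `π ω`, as `signRep`
shows; for `π ω = π τ * s i` with `s i ∉ ris τ` this parity is odd. -/
theorem simple_mem_rightInvSeq_of_isRightDescent {ω : List B} {i : B}
    (h : cs.IsRightDescent (π ω) i) : s i ∈ ris ω := by
  classical
  obtain ⟨τ, hτ, hτω⟩ := cs.exists_isReduced (π ω * s i)
  have hωτ : π ω = π τ * s i := by rw [← hτω, simple_mul_simple_cancel_right]
  have hnotmem : s i ∉ ris τ := fun hmem => by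
    have := (cs.isRightInversion_of_mem_rightInvSeq hτ hmem).2
    rw [← hτω, simple_mul_simple_cancel_right] at this
    exact lt_asymm this h
  have hsimple : cs.signRep (s i) (s i, 0) = (s i, 1) := by
    simp [signRep, signPerm_apply, simple_mul_simple_self]
  have hcount : ((ris ω).count (s i) : ZMod 2) = 1 := by
    have h1 := congrArg Prod.snd (cs.signRep_wordProd_apply ω (s i, 0))
    rw [hωτ, map_mul, Equiv.Perm.mul_apply, hsimple, ← hωτ, signRep_wordProd_apply,
      count_eq_zero.mpr hnotmem] at h1
    simpa using h1.symm
  refine count_pos_iff.mp (Nat.pos_of_ne_zero fun h0 => ?_)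
  rw [h0, Nat.cast_zero] at hcount
  exact zero_ne_one hcount

theorem exists_eraseIdx_of_isRightDescent {ω : List B} {i : B}
    (h : cs.IsRightDescent (π ω) i) : ∃ j < ω.length, π ω * s i = π (ω.eraseIdx j) := by
  obtain ⟨j, hj, hji⟩ := mem_iff_getElem.mp (cs.simple_mem_rightInvSeq_of_isRightDescent h)
  refine ⟨j, by simpa using hj, ?_⟩
  rw [← wordProd_mul_getD_rightInvSeq, getD_eq_getElem _ _ hj, hji]

section Parabolic

variable {J : Set B}

theorem simple_mem_parab {j : B} (hj : j ∈ J) : s j ∈ cs.parab J :=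
  Subgroup.subset_closure ⟨j, hj, rfl⟩

theorem wordProd_mem_parab {ω : List B} (hω : ∀ b ∈ ω, b ∈ J) : π ω ∈ cs.parab J :=
  (cs.parab J).list_prod_mem <| by simpa using fun b hb => cs.simple_mem_parab (hω b hb)

theorem exists_isReduced_eq_mul_simple {ρ : List B} (hρ : cs.IsReduced ρ)
    (hρJ : ∀ b ∈ ρ, b ∈ J) {j : B} (hj : j ∈ J) :
    ∃ ω : List B, cs.IsReduced ω ∧ π ω = π ρ * s j ∧ ∀ b ∈ ω, b ∈ J := by
  by_cases hdesc : cs.IsRightDescent (π ρ) j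
  · obtain ⟨k, hk, hρk⟩ := cs.exists_eraseIdx_of_isRightDescent hdesc
    refine ⟨ρ.eraseIdx k, ?_, hρk.symm, fun b hb => hρJ b (mem_of_mem_eraseIdx hb)⟩
    have hlen := cs.isRightDescent_iff.mp hdesc
    rw [hρk, hρ.eq] at hlen
    rw [IsReduced, length_eraseIdx_of_lt hk]
    omega
  · refine ⟨ρ ++ [j], ?_, by rw [wordProd_append, wordProd_singleton], ?_⟩
    · rw [IsReduced, wordProd_append, wordProd_singleton, cs.not_isRightDescent_iff.mp hdesc,
        hρ.eq, length_append, length_singleton]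
    · simpa [or_imp, forall_and] using ⟨hρJ, hj⟩

theorem exists_isReduced_of_mem_parab {u : W} (hu : u ∈ cs.parab J) :
    ∃ ω : List B, cs.IsReduced ω ∧ π ω = u ∧ ∀ b ∈ ω, b ∈ J := by
  induction hu using Subgroup.closure_induction_right with
  | one => exact ⟨[], by simp [IsReduced], rfl, by simp⟩
  | mul_right _ _ _ hy ih =>
    obtain ⟨j, hj, rfl⟩ := hy
    obtain ⟨ρ, hρ, rfl, hρJ⟩ := ih
    exact cs.exists_isReduced_eq_mul_simple hρ hρJ hj
  | mul_inv_cancel _ _ _ hy ih =>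
    obtain ⟨j, hj, rfl⟩ := hy
    obtain ⟨ρ, hρ, rfl, hρJ⟩ := ih
    rw [inv_simple]
    exact cs.exists_isReduced_eq_mul_simple hρ hρJ hj

/-- A right descent `s k` of `π (τ ++ ρ)` lies in `ris (τ ++ ρ)`; if it came from `τ`, its
conjugate `π ρ * s k * (π ρ)⁻¹ ∈ W_K` would shorten `π τ`, and it cannot come from `ρ` because
`ρ ++ [k]` is reduced. -/
theorem isReduced_append_of_isMinRight {K : Set B} {τ ρ : List B} (hτ : cs.IsReduced τ)
    (hτK : cs.IsMinRight K (π τ)) (hρ : cs.IsReduced ρ) (hρK : ∀ b ∈ ρ, b ∈ K) :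
    cs.IsReduced (τ ++ ρ) := by
  induction ρ using List.reverseRecOn with
  | nil => simpa using hτ
  | append_singleton ρ k ih =>
    have hρ' : cs.IsReduced ρ := by simpa using hρ.take ρ.length
    have hρk : ℓ (π ρ * s k) = ρ.length + 1 := by
      simpa [IsReduced, wordProd_append] using hρ.eq
    have hnd : ¬ cs.IsRightDescent (π (τ ++ ρ)) k := by
      intro hdesc
      have hmem := cs.simple_mem_rightInvSeq_of_isRightDescent hdesc
      rw [rightInvSeq_append, mem_append, mem_map] at hmem
      rcases hmem with ⟨t, ht, htk⟩ | hmem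
      · have hteq : t = π ρ * s k * (π ρ)⁻¹ := by
          rw [← htk, MulAut.conj_apply]
          group
        have hρmem := cs.wordProd_mem_parab fun b hb => hρK b (mem_append_left _ hb)
        have hmin := hτK t (hteq ▸ mul_mem (mul_mem hρmem (cs.simple_mem_parab (hρK k (by simp))))
          (inv_mem hρmem))
        exact absurd (cs.isRightInversion_of_mem_rightInvSeq hτ ht).2 (not_lt.2 hmin)
      · have hshort := (cs.isRightInversion_of_mem_rightInvSeq hρ' hmem).2
        have := cs.length_wordProd_le ρ
        omega
    have ih' := ih hρ' fun b hb => hρK b (mem_append_left _ hb)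
    rw [← append_assoc, IsReduced, wordProd_append, wordProd_singleton,
      cs.not_isRightDescent_iff.mp hnd, ih'.eq]
    simp [add_assoc]

theorem length_mul_of_isMinRight {K : Set B} {w b : W} (hw : cs.IsMinRight K w)
    (hb : b ∈ cs.parab K) : ℓ (w * b) = ℓ w + ℓ b := by
  obtain ⟨τ, hτ, rfl⟩ := cs.exists_isReduced w
  obtain ⟨ρ, hρ, rfl, hρK⟩ := cs.exists_isReduced_of_mem_parab hb
  rw [← wordProd_append, (cs.isReduced_append_of_isMinRight hτ hw hρ hρK).eq, hτ.eq, hρ.eq,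
    length_append]

end Parabolic

section Automorphism

variable {e : B ≃ B} {d : W ≃* W}

theorem map_wordProd_of_map_simple (hd : ∀ i, d (s i) = s (e i)) (ω : List B) :
    d (π ω) = π (ω.map e) := by
  induction ω with
  | nil => simp
  | cons i ω ih => rw [wordProd_cons, map_mul, hd, ih, map_cons, wordProd_cons]

theorem length_map_le_of_map_simple (hd : ∀ i, d (s i) = s (e i)) (v : W) : ℓ (d v) ≤ ℓ v := by
  obtain ⟨ω, hω, rfl⟩ := cs.exists_isReduced v
  rw [cs.map_wordProd_of_map_simple hd, hω.eq]
  simpa using cs.length_wordProd_le (ω.map e)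

theorem length_map_of_map_simple (hd : ∀ i, d (s i) = s (e i)) (v : W) : ℓ (d v) = ℓ v := by
  have hd_symm : ∀ i, d.symm (s i) = s (e.symm i) := fun i => by
    rw [MulEquiv.symm_apply_eq, hd, Equiv.apply_symm_apply]
  refine le_antisymm (cs.length_map_le_of_map_simple hd v) ?_
  simpa using cs.length_map_le_of_map_simple hd_symm (d v)

theorem map_parab_of_map_simple (hd : ∀ i, d (s i) = s (e i)) (J : Set B) :
    (cs.parab J).map d.toMonoidHom = cs.parab (e '' J) := by
  simp only [parab, MonoidHom.map_closure, Set.image_image, MulEquiv.coe_toMonoidHom, hd]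

end Automorphism

section CyclicShift

variable {e : B ≃ B} {J : Set B} {x y : W}

variable {cs} in
theorem IsReduced.isLeftDescent_of_head?_eq {ω : List B} (hω : cs.IsReduced ω) {i : B}
    (h : ω.head? = some i) : cs.IsLeftDescent (π ω) i := by
  obtain ⟨τ, rfl⟩ := head?_eq_some_iff.mp h
  have := cs.length_wordProd_le τ
  rw [IsLeftDescent, wordProd_cons, simple_mul_simple_cancel_left, ← wordProd_cons, hω.eq,
    length_cons]
  omega

variable {cs} in
theorem IsReduced.isRightDescent_of_getLast?_eq {ω : List B} (hω : cs.IsReduced ω) {i : B}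
    (h : ω.getLast? = some i) : cs.IsRightDescent (π ω) i := by
  obtain ⟨τ, rfl⟩ := getLast?_eq_some_iff.mp h
  have := cs.length_wordProd_le τ
  rw [IsRightDescent, wordProd_append, wordProd_singleton, simple_mul_simple_cancel_right,
    ← wordProd_singleton, ← wordProd_append, hω.eq, length_append, length_singleton]
  omega

theorem exists_isReduced_head?_eq_of_isLeftDescent {i : B} (h : cs.IsLeftDescent x i) :
    ∃ ω : List B, cs.IsReduced ω ∧ π ω = x ∧ ω.head? = some i := by
  obtain ⟨τ, hτ, hτx⟩ := cs.exists_isReduced (s i * x)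
  have hx : π (i :: τ) = x := by rw [wordProd_cons, ← hτx, simple_mul_simple_cancel_left]
  refine ⟨i :: τ, ?_, hx, rfl⟩
  have := cs.isLeftDescent_iff.mp h
  rw [IsReduced, hx, length_cons, ← hτ.eq, ← hτx]
  omega

theorem exists_isReduced_getLast?_eq_of_isRightDescent {i : B} (h : cs.IsRightDescent x i) :
    ∃ ω : List B, cs.IsReduced ω ∧ π ω = x ∧ ω.getLast? = some i := by
  obtain ⟨τ, hτ, hτx⟩ := cs.exists_isReduced (x * s i)
  have hx : π (τ ++ [i]) = x := by
    rw [wordProd_append, wordProd_singleton, ← hτx, simple_mul_simple_cancel_right]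
  refine ⟨τ ++ [i], ?_, hx, by simp⟩
  have := cs.isRightDescent_iff.mp h
  rw [IsReduced, hx, length_append, length_singleton, ← hτ.eq, ← hτx]
  omega

theorem cyclicShift_iff : cs.CyclicShift e J x y ↔ ℓ x = ℓ y ∧
    ∃ i ∈ J, y = s i * x * s (e i) ∧ (cs.IsLeftDescent x i ∨ cs.IsRightDescent x (e i)) := by
  constructor
  · rintro ⟨hlen, ω, hω, rfl, ⟨i, hi, hhead, rfl⟩ | ⟨_, ⟨i, hi, rfl⟩, hlast, rfl⟩⟩
    · exact ⟨hlen, i, hi, rfl, .inl (hω.isLeftDescent_of_head?_eq hhead)⟩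
    · rw [Equiv.symm_apply_apply] at hlen ⊢
      exact ⟨hlen, i, hi, rfl, .inr (hω.isRightDescent_of_getLast?_eq hlast)⟩
  · rintro ⟨hlen, i, hi, rfl, hdesc | hdesc⟩
    · obtain ⟨ω, hω, rfl, hhead⟩ := cs.exists_isReduced_head?_eq_of_isLeftDescent hdesc
      exact ⟨hlen, ω, hω, rfl, .inl ⟨i, hi, hhead, rfl⟩⟩
    · obtain ⟨ω, hω, rfl, hlast⟩ := cs.exists_isReduced_getLast?_eq_of_isRightDescent hdesc
      exact ⟨hlen, ω, hω, rfl, .inr ⟨e i, ⟨i, hi, rfl⟩, hlast, by rw [Equiv.symm_apply_apply]⟩⟩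

theorem CyclicShift.symm (h : cs.CyclicShift e J x y) : cs.CyclicShift e J y x := by
  obtain ⟨hlen, i, hi, rfl, hdesc⟩ := cs.cyclicShift_iff.mp h
  refine cs.cyclicShift_iff.mpr ⟨hlen.symm, i, hi, ?_, hdesc.symm.imp ?_ ?_⟩
  · simp [mul_assoc, simple_mul_simple_self]
  · rw [IsRightDescent, IsLeftDescent, ← hlen, mul_assoc (s i) x, simple_mul_simple_cancel_left]
    exact id
  · rw [IsLeftDescent, IsRightDescent, ← hlen, simple_mul_simple_cancel_right]
    exact id

theorem length_eq_of_reflTransGen (h : Relation.ReflTransGen (cs.CyclicShift e J) x y) :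
    ℓ x = ℓ y := by
  induction h with
  | refl => rfl
  | tail _ hstep ih => exact ih.trans hstep.1

end CyclicShift

section TwistedConjugation

variable {e : B ≃ B} {d : W ≃* W} {J : Set B} {w x : W}

theorem exists_mem_parab_eq_of_reflTransGen (hd : ∀ i, d (s i) = s (e i))
    (h : Relation.ReflTransGen (cs.CyclicShift e J) x w) :
    ∃ a ∈ cs.parab J, x = a * w * (d a)⁻¹ := by
  induction h using Relation.ReflTransGen.head_induction_on with
  | refl => exact ⟨1, one_mem _, by simp⟩
  | head hstep _ ih =>
    obtain ⟨a, ha, rfl⟩ := ih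
    obtain ⟨-, i, hi, hx, -⟩ := cs.cyclicShift_iff.mp hstep.symm
    refine ⟨s i * a, mul_mem (cs.simple_mem_parab hi) ha, ?_⟩
    rw [hx, map_mul, hd, mul_inv_rev, inv_simple]
    group

theorem length_le_mul_mul_inv_map (hd : ∀ i, d (s i) = s (e i))
    (hw : cs.IsMinRight (e '' J) w) {a : W} (ha : a ∈ cs.parab J) :
    ℓ w ≤ ℓ (a * w * (d a)⁻¹) := by
  have hda : (d a)⁻¹ ∈ cs.parab (e '' J) :=
    inv_mem (cs.map_parab_of_map_simple hd J ▸ Subgroup.mem_map_of_mem _ ha)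
  have hadd := cs.length_mul_of_isMinRight hw hda
  rw [length_inv, cs.length_map_of_map_simple hd] at hadd
  have htri := cs.length_mul_le a⁻¹ (a * w * (d a)⁻¹)
  rw [show a⁻¹ * (a * w * (d a)⁻¹) = w * (d a)⁻¹ by group, length_inv] at htri
  omega

theorem cyclicShift_simple_mul_mul_simple (hd : ∀ i, d (s i) = s (e i))
    (hw : cs.IsMinRight (e '' J) w) (hx : Relation.ReflTransGen (cs.CyclicShift e J) x w)
    {j : B} (hj : j ∈ J) (hdesc : cs.IsLeftDescent x j) :
    cs.CyclicShift e J x (s j * x * s (e j)) := by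
  obtain ⟨a, ha, hxa⟩ := cs.exists_mem_parab_eq_of_reflTransGen hd hx
  have hlower : ℓ w ≤ ℓ (s j * x * s (e j)) := by
    convert cs.length_le_mul_mul_inv_map hd hw (mul_mem (cs.simple_mem_parab hj) ha) using 2
    rw [hxa, map_mul, hd, mul_inv_rev, inv_simple]
    group
  have hupper := cs.length_mul_le (s j * x) (s (e j))
  have := cs.isLeftDescent_iff.mp hdesc
  have := cs.length_eq_of_reflTransGen hx
  rw [length_simple] at hupper
  exact cs.cyclicShift_iff.mpr ⟨by omega, j, hj, rfl, .inl hdesc⟩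

theorem reflTransGen_inv_wordProd_mul_mul_map (hd : ∀ i, d (s i) = s (e i))
    (hw : cs.IsMinRight (e '' J) w) {w₁ : W}
    (hsim : Relation.ReflTransGen (cs.CyclicShift e J) w₁ w) {ρ : List B}
    (hρ : cs.IsReduced ρ) (hρJ : ∀ b ∈ ρ, b ∈ J) (hlen : ℓ ((π ρ)⁻¹ * w₁) + ρ.length = ℓ w₁) :
    Relation.ReflTransGen (cs.CyclicShift e J) ((π ρ)⁻¹ * w₁ * d (π ρ)) w := by
  induction ρ using List.reverseRecOn with
  | nil => simpa using hsim
  | append_singleton ρ k ih =>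
    have hρ' : cs.IsReduced ρ := by simpa using hρ.take ρ.length
    have hsplit : (π ρ)⁻¹ * w₁ = s k * ((π (ρ ++ [k]))⁻¹ * w₁) := by
      rw [wordProd_append, wordProd_singleton, mul_inv_rev, inv_simple, ← mul_assoc,
        ← mul_assoc, simple_mul_simple_self, one_mul]
    have hlen' : ℓ ((π ρ)⁻¹ * w₁) + ρ.length = ℓ w₁ := by
      have hupper := cs.length_mul_le (s k) ((π (ρ ++ [k]))⁻¹ * w₁)
      have hlower := cs.length_le_length_mul_add_left (π ρ)⁻¹ w₁
      rw [length_simple, ← hsplit] at hupper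
      rw [length_inv, hρ'.eq] at hlower
      simp only [length_append, length_singleton] at hlen
      omega
    set x := (π ρ)⁻¹ * w₁ * d (π ρ) with hx_def
    have hx := ih hρ' (fun b hb => hρJ b (mem_append_left _ hb)) hlen'
    have hdesc : cs.IsLeftDescent x k := by
      have hkx : s k * x = (π (ρ ++ [k]))⁻¹ * w₁ * d (π ρ) := by
        rw [hx_def, hsplit, ← mul_assoc, ← mul_assoc, simple_mul_simple_self, one_mul]
      have hupper := cs.length_mul_le ((π (ρ ++ [k]))⁻¹ * w₁) (d (π ρ))
      rw [cs.length_map_of_map_simple hd, hρ'.eq, ← hkx] at hupper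
      have := cs.length_eq_of_reflTransGen hx
      have := cs.length_eq_of_reflTransGen hsim
      simp only [length_append, length_singleton] at hlen
      rw [IsLeftDescent]
      omega
    have hstep := cs.cyclicShift_simple_mul_mul_simple hd hw hx (hρJ k (by simp)) hdesc
    have hshift : s k * x * s (e k) = (π (ρ ++ [k]))⁻¹ * w₁ * d (π (ρ ++ [k])) := by
      rw [hx_def, wordProd_append, wordProd_singleton, map_mul, hd, mul_inv_rev, inv_simple]
      group
    exact hshift ▸ .head hstep.symm hx

end TwistedConjugation

end CoxeterSystem

/-- Let `w ∈ W^{δ(J)}`, `w₁ ∼_{J,δ} w` and `u ∈ W_J` with `ℓ(u⁻¹ w₁) = ℓ(w₁) - ℓ(u)`.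
Then `ℓ(u⁻¹ w₁ δ(u)) = ℓ(w)` and `u⁻¹ w₁ δ(u) ∼_{J,δ} w`. -/
theorem cyclicShift_conj (cs : CoxeterSystem M W) (π : B ≃ B) (d : W ≃* W)
    (hd : ∀ i : B, d (cs.simple i) = cs.simple (π i))
    (J : Set B) (w : W) (hw : cs.IsMinRight (π '' J) w)
    (w₁ : W) (hsim : Relation.ReflTransGen (cs.CyclicShift π J) w₁ w)
    (u : W) (hu : u ∈ cs.parab J)
    (hlen : cs.length (u⁻¹ * w₁) + cs.length u = cs.length w₁) :
    cs.length (u⁻¹ * w₁ * d u) = cs.length w ∧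
      Relation.ReflTransGen (cs.CyclicShift π J) (u⁻¹ * w₁ * d u) w := by
  obtain ⟨ρ, hρ, rfl, hρJ⟩ := cs.exists_isReduced_of_mem_parab hu
  have hchain := cs.reflTransGen_inv_wordProd_mul_mul_map hd hw hsim hρ hρJ (hρ.eq ▸ hlen)
  exact ⟨cs.length_eq_of_reflTransGen hchain, hchain⟩
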